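/- Let F be a field, let ℓ ≥ 1 and d ≥ 5 be integers, and let PSp_{2ℓ}(F) denote the quotient of the symplectic group Sp_{2ℓ}(F) (the matrices preserving the standard symplectic form on F^{2ℓ}) by its center. If PSp_{2ℓ}(F) lies in the class Γ_d (i.e., has no section isomorphic to the alternating group A_d), then ℓ < d; that is, the dimension 2ℓ of the natural module satisfies 2ℓ < 2d. -/

import Mathlib

open scoped Pointwise

/-- A group `H` has a *section* isomorphic to the alternating group `A_d`, i.e. there are
subgroups `K ⊴ L ≤ H` with `L/K ≅ A_d`; equivalently, there is a subgroup `L ≤ H` and a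
surjective homomorphism from `L` onto `A_d`. -/
def HasAltSection (d : ℕ) (H : Type*) [Group H] : Prop :=
  ∃ (L : Subgroup H) (φ : ↥L →* alternatingGroup (Fin d)), Function.Surjective φ

/-- The class `Γ_d`: groups with no section isomorphic to the alternating group `A_d`. -/
def InGamma (d : ℕ) (H : Type*) [Group H] : Prop := ¬ HasAltSection d H

/-- A permutation group `G ≤ Sym(Ω)` is primitive if it acts transitively on `Ω` and
every block of the action is trivial (i.e. it preserves no nontrivial partition of `Ω`). -/
def IsPrimitivePerm {Ω : Type*} (G : Subgroup (Equiv.Perm Ω)) : Prop :=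
  MulAction.IsPretransitive G Ω ∧
    ∀ B : Set Ω, MulAction.IsBlock G B → MulAction.IsTrivialBlock B

/-- `G ≤ Sym(Ω)` has a base of size at most `k`: a subset of `Ω` of cardinality at most `k`
whose pointwise stabilizer in `G` is trivial.  The base size `b(G)` is the least such `k`,
so `b(G) ≤ k` is expressed by `HasBaseOfSize G k`. -/
def HasBaseOfSize {Ω : Type*} (G : Subgroup (Equiv.Perm Ω)) (k : ℕ) : Prop :=
  ∃ S : Finset Ω, S.card ≤ k ∧ ∀ g ∈ G, (∀ α ∈ S, g α = α) → g = 1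

/-- The pointwise stabilizer `G_(Δ) = ⋂_{α ∈ Δ} G_α` of a subset `Δ ⊆ Ω` in `G ≤ Sym(Ω)`,
as a subgroup of `G` (equal to `G` itself when `Δ` is empty). -/
def PointwiseStab {Ω : Type*} (G : Subgroup (Equiv.Perm Ω)) (Δ : Finset Ω) : Subgroup ↥G :=
  ⨅ α ∈ Δ, MulAction.stabilizer (↥G) α

/-!
A permutation `σ` of `{1, …, ℓ}` acts on `F^{2ℓ}` by permuting the hyperbolic pairs
`(e_i, f_i)`; this is the block matrix `diag(P_σ, P_σ)`, which is symplectic since `P_σ` is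
orthogonal. The resulting embedding `Sym(ℓ) → Sp_{2ℓ}(F)` restricts to `A_d` for `d ≤ ℓ`, and
stays injective modulo the centre of `Sp_{2ℓ}(F)` because an element of `A_d` mapping into the
centre commutes with all of `A_d`, whose centre is trivial for `d ≥ 4`. So `A_d` is a subgroup
of `PSp_{2ℓ}(F)` whenever `d ≤ ℓ`.
-/

open Matrix

theorem hasAltSection_of_injective {d : ℕ} {H : Type*} [Group H]
    (χ : alternatingGroup (Fin d) →* H) (hχ : Function.Injective χ) : HasAltSection d H :=
  ⟨χ.range, (MonoidHom.ofInjective hχ).symm.toMonoidHom,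
    (MonoidHom.ofInjective hχ).symm.surjective⟩

theorem QuotientGroup.mk'_center_comp_injective {G H : Type*} [Group G] [Group H]
    {φ : G →* H} (hφ : Function.Injective φ) (hG : Subgroup.center G = ⊥) :
    Function.Injective ((QuotientGroup.mk' (Subgroup.center H)).comp φ) := by
  rw [injective_iff_map_eq_one]
  intro g hg
  rw [MonoidHom.comp_apply, QuotientGroup.mk'_apply, QuotientGroup.eq_one_iff,
    Subgroup.mem_center_iff] at hg
  have hg_central : g ∈ Subgroup.center G :=
    Subgroup.mem_center_iff.2 fun x ↦ hφ <| by simpa only [map_mul] using hg (φ x)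
  simpa [hG] using hg_central

namespace SymplecticGroup

variable {l R : Type*} [DecidableEq l] [Fintype l] [CommRing R]

theorem fromBlocks_diagonal_mem_of_orthogonal {A : Matrix l l R} (hA : Aᵀ * A = 1) :
    fromBlocks A 0 0 A ∈ symplecticGroup l R :=
  fromBlocks_mem_iff.2 ⟨by simp, by simp, by simpa using hA⟩

variable (l R)

def permHom : Equiv.Perm l →* symplecticGroup l R where
  toFun σ := ⟨fromBlocks (σ⁻¹.permMatrix R) 0 0 (σ⁻¹.permMatrix R),
    fromBlocks_diagonal_mem_of_orthogonal <| by
      rw [transpose_permMatrix, ← permMatrix_mul, inv_inv, inv_mul_cancel, permMatrix_one]⟩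
  map_one' := by ext1; simp
  map_mul' σ τ := by ext1; simp [fromBlocks_multiply]

theorem permHom_injective [Nontrivial R] : Function.Injective (permHom l R) := by
  intro σ τ h
  have hblock := congrArg (fun M : symplecticGroup l R ↦ toBlocks₁₁ M.val) h
  simp only [permHom, MonoidHom.coe_mk, OneHom.coe_mk, toBlocks_fromBlocks₁₁] at hblock
  exact inv_injective <| Equiv.ext fun i ↦ Option.some_injective _ <| by
    simpa using DFunLike.congr_fun (PEquiv.toMatrix_injective hblock) i

end SymplecticGroup

theorem lt_of_PSp_in_gamma_general (F : Type) [Field F] (l d : ℕ) (hd : 5 ≤ d)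
    (h : InGamma d (↥(Matrix.symplecticGroup (Fin l) F) ⧸
      Subgroup.center ↥(Matrix.symplecticGroup (Fin l) F))) :
    l < d := by
  by_contra! hdl
  let ι : alternatingGroup (Fin d) →* symplecticGroup (Fin l) F :=
    (SymplecticGroup.permHom (Fin l) F).comp <|
      (Equiv.Perm.viaEmbeddingHom (Fin.castLEEmb hdl)).comp (alternatingGroup (Fin d)).subtype
  have hι : Function.Injective ι :=
    (SymplecticGroup.permHom_injective _ _).comp <|
      (Equiv.Perm.viaEmbeddingHom_injective _).comp (alternatingGroup (Fin d)).subtype_injective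
  have hcenter : Subgroup.center (alternatingGroup (Fin d)) = ⊥ :=
    alternatingGroup.center_eq_bot (by simpa using hd.trans' (by norm_num))
  exact h <| hasAltSection_of_injective _ <|
    QuotientGroup.mk'_center_comp_injective hι hcenter

/-- If `PSp_{2ℓ}(F)` lies in `Γ_d` (with `ℓ ≥ 1`, `d ≥ 5`), then `ℓ < d`; that is, the
dimension `2ℓ` of the natural module satisfies `2ℓ < 2d`.  Here the symplectic group
consists of the `2ℓ × 2ℓ` matrices `M` over `F` with `M · J · Mᵀ = J` for the standard
skew block matrix `J`. -/
theorem lt_of_PSp_in_gamma (F : Type) [Field F] (l d : ℕ) (hl : 1 ≤ l) (hd : 5 ≤ d)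
    (h : InGamma d (↥(Matrix.symplecticGroup (Fin l) F) ⧸
      Subgroup.center ↥(Matrix.symplecticGroup (Fin l) F))) :
    l < d :=
  lt_of_PSp_in_gamma_general F l d hd h
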